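/- Let G be a connected graph on n vertices without isolated vertices and with domination number γ(G) = 1. Then for every p ∈ ((n+1)/(2n), 1], G is a universal γ_p-doubler; that is, γ_p(πG) = 2·γ_p(G) for every permutation π of V(G). -/

import Mathlib

open SimpleGraph

/-- Closed neighborhood of a set of vertices. -/
def closedNbhd {V : Type*} (G : SimpleGraph V) (S : Set V) : Set V :=
  {v | v ∈ S ∨ ∃ u ∈ S, G.Adj u v}

/-- `S` is a `p`-dominating set of `G`. -/
def IsPDomSet {V : Type*} [Fintype V] (G : SimpleGraph V) (p : ℝ) (S : Set V) : Prop :=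
  p ≤ (closedNbhd G S).ncard / (Fintype.card V : ℝ)

/-- The `p`-domination number of `G`. -/
noncomputable def pDomNum {V : Type*} [Fintype V] (G : SimpleGraph V) (p : ℝ) : ℕ :=
  sInf {k | ∃ S : Set V, IsPDomSet G p S ∧ S.ncard = k}

/-- `S` is a dominating set of `G`. -/
def IsDomSet {V : Type*} (G : SimpleGraph V) (S : Set V) : Prop :=
  ∀ v, v ∈ closedNbhd G S

/-- The domination number of `G`. -/
noncomputable def domNum {V : Type*} (G : SimpleGraph V) : ℕ :=
  sInf {k | ∃ S : Set V, IsDomSet G S ∧ S.ncard = k}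

/-- The prism of `G` with respect to a permutation `π`. -/
def prism {V : Type*} (G : SimpleGraph V) (π : Equiv.Perm V) : SimpleGraph (V ⊕ V) where
  Adj x y := match x, y with
    | .inl a, .inl b => G.Adj a b
    | .inr a, .inr b => G.Adj a b
    | .inl a, .inr b => π a = b
    | .inr a, .inl b => π b = a
  symm := ⟨by rintro (a|a) (b|b) h <;> simp_all [SimpleGraph.adj_comm]⟩
  loopless := ⟨by rintro (a|a) h <;> simp_all⟩

/-!
A dominating vertex `u` of `G` is a `p`-dominating set on its own, so `γ_p(G) = 1`, and
`{u₁, u₂}` dominates every prism `πG`. Conversely, a single vertex of `πG` has at most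
`n - 1` neighbours in its own copy and one in the other, so it dominates at most `n + 1` of
the `2n` vertices; for `p > (n + 1) / (2n)` this is not enough, hence `γ_p(πG) = 2`.
-/

section PDomination

variable {V : Type*} {G : SimpleGraph V} {p : ℝ}

theorem closedNbhd_empty : closedNbhd G ∅ = ∅ := by
  ext v
  simp [closedNbhd]

theorem not_isPDomSet_empty [Fintype V] (hp : 0 < p) : ¬ IsPDomSet G p ∅ := by
  simp [IsPDomSet, closedNbhd_empty, hp]

theorem isDomSet_singleton_iff {u : V} : IsDomSet G {u} ↔ ∀ v, v = u ∨ G.Adj u v := by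
  simp [IsDomSet, closedNbhd]

theorem IsDomSet.closedNbhd_eq_univ {S : Set V} (hS : IsDomSet G S) :
    closedNbhd G S = Set.univ :=
  Set.eq_univ_of_forall hS

theorem IsDomSet.isPDomSet [Fintype V] [Nonempty V] {S : Set V} (hS : IsDomSet G S) (hp : p ≤ 1) :
    IsPDomSet G p S := by
  have hcard : (0 : ℝ) < Fintype.card V := by exact_mod_cast Fintype.card_pos
  rwa [IsPDomSet, hS.closedNbhd_eq_univ, Set.ncard_univ, Nat.card_eq_fintype_card,
    div_self hcard.ne']

theorem pDomNum_eq_of_isPDomSet_of_forall_lt [Fintype V] {S : Set V} {k : ℕ}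
    (hS : IsPDomSet G p S) (hSk : S.ncard = k)
    (hmin : ∀ T : Set V, T.ncard < k → ¬ IsPDomSet G p T) : pDomNum G p = k := by
  have hk : k ∈ {k | ∃ S : Set V, IsPDomSet G p S ∧ S.ncard = k} := ⟨S, hS, hSk⟩
  apply le_antisymm (Nat.sInf_le hk)
  obtain ⟨T, hT, hTk⟩ := Nat.sInf_mem ⟨k, hk⟩
  by_contra! hlt
  exact hmin T (hTk ▸ hlt) hT

theorem pDomNum_eq_one_of_isDomSet_singleton [Fintype V] {u : V} (hu : IsDomSet G {u}) (hp0 : 0 < p)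
    (hp1 : p ≤ 1) : pDomNum G p = 1 := by
  have : Nonempty V := ⟨u⟩
  refine pDomNum_eq_of_isPDomSet_of_forall_lt (hu.isPDomSet hp1) (Set.ncard_singleton u) ?_
  intro T hT
  rw [Nat.lt_one_iff, Set.ncard_eq_zero] at hT
  exact hT ▸ not_isPDomSet_empty hp0

theorem exists_isDomSet_singleton_of_domNum_eq_one (h : domNum G = 1) :
    ∃ u : V, IsDomSet G {u} := by
  have hne : {k | ∃ S : Set V, IsDomSet G S ∧ S.ncard = k}.Nonempty :=
    Nat.nonempty_of_sInf_eq_succ h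
  obtain ⟨S, hS, hS1⟩ := Nat.sInf_mem hne
  rw [← domNum, h, Set.ncard_eq_one] at hS1
  obtain ⟨u, rfl⟩ := hS1
  exact ⟨u, hS⟩

end PDomination

section Prism

variable {V : Type*} {G : SimpleGraph V} {π : Equiv.Perm V} {p : ℝ}

theorem IsDomSet.prism_pair {u : V} (hu : IsDomSet G {u}) :
    IsDomSet (prism G π) {Sum.inl u, Sum.inr u} := by
  rintro (v | v) <;> rcases isDomSet_singleton_iff.mp hu v with rfl | hadj
  · exact Or.inl (by simp)
  · exact Or.inr ⟨Sum.inl u, by simp, hadj⟩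
  · exact Or.inl (by simp)
  · exact Or.inr ⟨Sum.inr u, by simp, hadj⟩

theorem closedNbhd_prism_inl_subset (a : V) :
    closedNbhd (prism G π) {Sum.inl a} ⊆ Set.range Sum.inl ∪ {Sum.inr (π a)} := by
  rintro (b | b) hb
  · exact Or.inl ⟨b, rfl⟩
  · rcases hb with hb | ⟨_, rfl, hadj⟩
    · simp at hb
    · exact Or.inr (congrArg Sum.inr hadj).symm

theorem closedNbhd_prism_inr_subset (a : V) :
    closedNbhd (prism G π) {Sum.inr a} ⊆ Set.range Sum.inr ∪ {Sum.inl (π.symm a)} := by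
  rintro (b | b) hb
  · rcases hb with hb | ⟨_, rfl, hadj⟩
    · simp at hb
    · exact Or.inr (congrArg Sum.inl (π.eq_symm_apply.mpr hadj))
  · exact Or.inl ⟨b, rfl⟩

theorem ncard_range_union_singleton_le [Fintype V] {W : Type*} {f : V → W} (hf : f.Injective)
    (z : W) :
    (Set.range f ∪ {z}).ncard ≤ Fintype.card V + 1 :=
  calc (Set.range f ∪ {z}).ncard ≤ (Set.range f).ncard + ({z} : Set W).ncard :=
        Set.ncard_union_le _ _
    _ = Fintype.card V + 1 := by
        rw [Set.ncard_range_of_injective hf, Nat.card_eq_fintype_card, Set.ncard_singleton]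

theorem ncard_closedNbhd_prism_singleton_le [Fintype V] (x : V ⊕ V) :
    (closedNbhd (prism G π) {x}).ncard ≤ Fintype.card V + 1 := by
  rcases x with a | a
  · exact (Set.ncard_le_ncard (closedNbhd_prism_inl_subset a)).trans
      (ncard_range_union_singleton_le Sum.inl_injective _)
  · exact (Set.ncard_le_ncard (closedNbhd_prism_inr_subset a)).trans
      (ncard_range_union_singleton_le Sum.inr_injective _)

theorem not_isPDomSet_prism_singleton [Fintype V]
    (hp : ((Fintype.card V : ℝ) + 1) / (2 * Fintype.card V) < p) (x : V ⊕ V) :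
    ¬ IsPDomSet (prism G π) p {x} := by
  intro hx
  have hn : (0 : ℝ) < Fintype.card V := by
    exact_mod_cast Fintype.card_pos_iff.mpr ⟨x.elim id id⟩
  have hbound : ((closedNbhd (prism G π) {x}).ncard : ℝ) ≤ Fintype.card V + 1 := by
    exact_mod_cast ncard_closedNbhd_prism_singleton_le x
  rw [IsPDomSet, Fintype.card_sum, Nat.cast_add, ← two_mul, le_div_iff₀ (by positivity)] at hx
  rw [div_lt_iff₀ (by positivity)] at hp
  linarith

theorem pDomNum_prism_eq_two_of_isDomSet_singleton [Fintype V] {u : V} (hu : IsDomSet G {u})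
    (hp0 : ((Fintype.card V : ℝ) + 1) / (2 * Fintype.card V) < p) (hp1 : p ≤ 1) :
    pDomNum (prism G π) p = 2 := by
  have : Nonempty V := ⟨u⟩
  have hp : 0 < p := (by positivity : (0 : ℝ) ≤ _).trans_lt hp0
  refine pDomNum_eq_of_isPDomSet_of_forall_lt (hu.prism_pair.isPDomSet hp1)
    (Set.ncard_pair Sum.inl_ne_inr) ?_
  intro T hT
  rcases (Set.ncard_le_one_iff_eq).mp (Nat.le_of_lt_succ hT) with rfl | ⟨x, rfl⟩
  · exact not_isPDomSet_empty hp
  · exact not_isPDomSet_prism_singleton hp0 x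

end Prism

theorem stmt3_general {V : Type*} [Fintype V] (G : SimpleGraph V) (n : ℕ)
    (hn : Fintype.card V = n)
    (hγ : domNum G = 1)
    (p : ℝ) (hp0 : ((n : ℝ) + 1) / (2 * n) < p) (hp1 : p ≤ 1) :
    ∀ π : Equiv.Perm V, pDomNum (prism G π) p = 2 * pDomNum G p := by
  intro π
  subst hn
  obtain ⟨u, hu⟩ := exists_isDomSet_singleton_of_domNum_eq_one hγ
  have hp : 0 < p := (by positivity : (0 : ℝ) ≤ _).trans_lt hp0
  rw [pDomNum_eq_one_of_isDomSet_singleton hu hp hp1,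
    pDomNum_prism_eq_two_of_isDomSet_singleton hu hp0 hp1]

theorem stmt3 {V : Type*} [Fintype V] (G : SimpleGraph V) (n : ℕ)
    (hn : Fintype.card V = n)
    (hconn : G.Connected)
    (hiso : ∀ v : V, ∃ u : V, G.Adj u v)
    (hγ : domNum G = 1)
    (p : ℝ) (hp0 : ((n : ℝ) + 1) / (2 * n) < p) (hp1 : p ≤ 1) :
    ∀ π : Equiv.Perm V, pDomNum (prism G π) p = 2 * pDomNum G p :=
  stmt3_general G n hn hγ p hp0 hp1
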